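/- arXiv:2007.12308 — 5 statements merged into one kernel-verified Lean document; each statement's English description precedes it below -/
import Mathlib

section
/- Let p be a prime, q a power of p, m ≥ 1, and k ≥ 0 an integer. Write ν(k) for the p-adic valuation of k (with ν(0) = ∞). Then for the m × m unipotent Jordan block J_m = I + N_m over F_q, the dimension of the kernel of J_m^k − I equals min(p^{ν(k)}, m). In particular J_m^k = I if and only if p^{ν(k)} ≥ m. -/
/-!
Write `k = p ^ ν(k) * u` with `p ∤ u` and `s = p ^ ν(k)`. In characteristic `p` the Frobenius
identity gives `J_m ^ k = (1 + N_m ^ s) ^ u`, and `(1 + x) ^ u - 1 = w * x` with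
`w = ∑_{i < u} (1 + x) ^ i ≡ u (mod x)`, a unit when `x` is nilpotent and `u` is invertible.
Hence `J_m ^ k - 1` and `N_m ^ s` have the same kernel, namely the vectors supported on the
first `min(s, m)` coordinates.
-/

/-- The `m × m` nilpotent Jordan block: ones on the superdiagonal. -/
def nilJordan (F : Type*) [Field F] (m : ℕ) : Matrix (Fin m) (Fin m) F :=
  fun i j => if (j : ℕ) = (i : ℕ) + 1 then 1 else 0

open Finset Matrix LinearMap Module

theorem Matrix.finrank_ker_toLin'_eq_card_iff {n K : Type*} [Fintype n] [DecidableEq n] [Field K]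
    (A : Matrix n n K) : finrank K (ker (toLin' A)) = Fintype.card n ↔ A = 0 := by
  rw [← finrank_fintype_fun_eq_card K, ← ker_eq_top.trans toLin'.map_eq_zero_iff]
  exact ⟨Submodule.eq_top_of_finrank_eq, fun h => h ▸ finrank_top K _⟩

theorem exists_isUnit_one_add_pow_sub_one_eq_mul {R : Type*} [Ring R] {x : R} (hx : IsNilpotent x)
    {u : ℕ} (hu : IsUnit (u : R)) : ∃ w, IsUnit w ∧ (1 + x) ^ u - 1 = w * x := by
  have hgeom (n : ℕ) : (1 + x) ^ n - 1 = (∑ i ∈ range n, (1 + x) ^ i) * x := by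
    rw [sub_eq_iff_eq_add, add_comm 1 x]
    exact (geom_sum_mul_add x n).symm
  have hcomm (n : ℕ) : Commute (∑ i ∈ range n, (1 + x) ^ i) x :=
    Commute.sum_left _ _ _ fun i _ => ((Commute.one_left x).add_left (Commute.refl x)).pow_left i
  refine ⟨∑ i ∈ range u, (1 + x) ^ i, ?_, hgeom u⟩
  set v := ∑ i ∈ range u, ∑ j ∈ range i, (1 + x) ^ j
  have hw : ∑ i ∈ range u, (1 + x) ^ i = u + v * x := by
    rw [← sub_eq_iff_eq_add', sum_mul]
    simp only [← hgeom, sum_sub_distrib, sum_const, card_range, nsmul_one]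
  have hv : Commute v x := Commute.sum_left _ _ _ fun i _ => hcomm i
  rw [hw]
  exact (hv.isNilpotent_mul_left hx).isUnit_add_left_of_commute hu (Nat.cast_commute u _).symm

theorem one_add_pow_char_pow {F A : Type*} [CommRing F] [Ring A] [Algebra F A] (p : ℕ)
    [Fact p.Prime] [CharP F p] (x : A) (e : ℕ) : (1 + x) ^ p ^ e = 1 + x ^ p ^ e := by
  simpa using congrArg (Polynomial.aeval x) (add_pow_char_pow (1 : Polynomial F) Polynomial.X p e)

section nilJordan

variable {F : Type*} [Field F] {m : ℕ}

theorem nilJordan_mulVec_apply (x : Fin m → F) (i : Fin m) :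
    (nilJordan F m *ᵥ x) i = if h : (i : ℕ) + 1 < m then x ⟨i + 1, h⟩ else 0 := by
  simp only [mulVec, dotProduct, nilJordan, ite_mul, one_mul, zero_mul]
  split_ifs with h
  · rw [Fintype.sum_eq_single ⟨i + 1, h⟩ fun j hj => if_neg fun h' => hj (Fin.ext h'), if_pos rfl]
  · exact sum_eq_zero fun j _ => if_neg fun (h' : (j : ℕ) = i + 1) => h (h' ▸ j.isLt)

theorem nilJordan_pow_mulVec_apply (t : ℕ) (x : Fin m → F) (i : Fin m) :
    (nilJordan F m ^ t *ᵥ x) i = if h : (i : ℕ) + t < m then x ⟨i + t, h⟩ else 0 := by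
  induction t generalizing i with
  | zero => simp
  | succ t ih =>
    rw [pow_succ', ← mulVec_mulVec, nilJordan_mulVec_apply]
    simp only [ih, ← add_assoc, Nat.add_right_comm _ 1 t]
    split_ifs <;> first | rfl | omega

theorem ker_toLin'_nilJordan_pow (t : ℕ) :
    ker (toLin' (nilJordan F m ^ t)) = ⨅ j ∈ {j : Fin m | t ≤ j}, ker (proj j) := by
  ext x
  simp only [mem_ker, toLin'_apply, Submodule.mem_iInf, proj_apply, Set.mem_ofPred_eq, funext_iff,
    Pi.zero_apply, nilJordan_pow_mulVec_apply]
  refine ⟨fun hx j hj => ?_, fun hx i => ?_⟩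
  · simpa [Nat.sub_add_cancel hj] using hx ⟨j - t, by omega⟩
  · split_ifs
    · exact hx _ (Nat.le_add_left _ _)
    · rfl

theorem finrank_ker_toLin'_nilJordan_pow (t : ℕ) :
    finrank F (ker (toLin' (nilJordan F m ^ t))) = min t m := by
  rw [ker_toLin'_nilJordan_pow,
    (iInfKerProjEquiv F (fun _ => F) (I := {j : Fin m | j < t}) (J := {j : Fin m | t ≤ j})
      (Set.disjoint_left.2 fun j (hj : (j : ℕ) < t) hj' => hj.not_ge hj')
      (fun j _ => lt_or_ge (j : ℕ) t)).finrank_eq,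
    finrank_fintype_fun_eq_card, Fintype.card_ofFinset, min_comm]
  exact Fin.card_filter_val_lt

theorem nilJordan_pow_eq_zero_of_le {t : ℕ} (h : m ≤ t) : nilJordan F m ^ t = 0 := by
  rw [← finrank_ker_toLin'_eq_card_iff, finrank_ker_toLin'_nilJordan_pow, Fintype.card_fin,
    min_eq_right h]

theorem isNilpotent_nilJordan : IsNilpotent (nilJordan F m) :=
  ⟨m, nilJordan_pow_eq_zero_of_le le_rfl⟩

theorem ker_toLin'_one_add_nilJordan_pow_sub_one (p : ℕ) [Fact p.Prime] [CharP F p] {k : ℕ}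
    (hk : k ≠ 0) : ker (toLin' ((1 + nilJordan F m) ^ k - 1))
      = ker (toLin' (nilJordan F m ^ p ^ padicValNat p k)) := by
  set s := p ^ padicValNat p k
  obtain ⟨u, hsu⟩ : s ∣ k := pow_padicValNat_dvd
  have hpu : ¬ p ∣ u := fun ⟨c, hc⟩ =>
    pow_succ_padicValNat_not_dvd hk ⟨c, by rw [pow_succ, mul_assoc, ← hc]; exact hsu⟩
  have hu : IsUnit (u : Matrix (Fin m) (Fin m) F) := by
    rw [← map_natCast (algebraMap F _)]
    exact (isUnit_iff_ne_zero.2 fun h => hpu ((CharP.cast_eq_zero_iff F p u).1 h)).map _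
  obtain ⟨w, hw, hfac⟩ := exists_isUnit_one_add_pow_sub_one_eq_mul
    (isNilpotent_nilJordan.pow_of_pos (pow_ne_zero _ (Fact.out : p.Prime).ne_zero)) hu
  rw [hsu, pow_mul, one_add_pow_char_pow (F := F) p, hfac, toLin'_mul,
    ker_comp_of_ker_eq_bot _ (ker_eq_bot.2 (mulVec_injective_of_isUnit hw))]

end nilJordan

theorem stmt_4_general {p : ℕ} (hp : p.Prime) {F : Type*} [Field F] [CharP F p]
    (m : ℕ) (k : ℕ) :
    Module.finrank F
        (LinearMap.ker (Matrix.toLin' ((1 + nilJordan F m) ^ k - 1)))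
      = (if k = 0 then m else min (p ^ padicValNat p k) m) ∧
    ((1 + nilJordan F m) ^ k = 1 ↔ (k = 0 ∨ m ≤ p ^ padicValNat p k)) := by
  have := Fact.mk hp
  have hrank : finrank F (ker (toLin' ((1 + nilJordan F m) ^ k - 1)))
      = if k = 0 then m else min (p ^ padicValNat p k) m := by
    split_ifs with hk
    · rw [hk, pow_zero, sub_self, map_zero, ker_zero, finrank_top, finrank_fin_fun]
    · rw [ker_toLin'_one_add_nilJordan_pow_sub_one p hk, finrank_ker_toLin'_nilJordan_pow]
  refine ⟨hrank, ?_⟩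
  rw [← sub_eq_zero, ← finrank_ker_toLin'_eq_card_iff, hrank, Fintype.card_fin]
  split_ifs with hk <;> simp [hk]

/-- For `J_m = I + N_m` over a finite field of characteristic `p`, the nullity of
`J_m^k - I` is `min(p^{ν(k)}, m)` (it is `m` for `k = 0`, corresponding to `ν(0) = ∞`);
in particular `J_m^k = I` iff `p^{ν(k)} ≥ m` (always true for `k = 0`). -/
theorem stmt_4 {p : ℕ} (hp : p.Prime) {F : Type*} [Field F] [Fintype F] [CharP F p]
    (m : ℕ) (hm : 1 ≤ m) (k : ℕ) :
    Module.finrank F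
        (LinearMap.ker (Matrix.toLin' ((1 + nilJordan F m) ^ k - 1)))
      = (if k = 0 then m else min (p ^ padicValNat p k) m) ∧
    ((1 + nilJordan F m) ^ k = 1 ↔ (k = 0 ∨ m ≤ p ^ padicValNat p k)) :=
  stmt_4_general hp m k
end

section
/- Let p be a prime, q a power of p, and let σ be the affine transformation of F_q^m given by σ(x) = x·J_m + ε_m, where J_m = I + N_m is the m × m unipotent Jordan block and ε_m = (1, 0, ..., 0). Then the order of σ in the group of affine bijections of F_q^m equals p^{1 + ⌊log_p m⌋}. -/
/-- The affine transformation `σ(x) = x·J_m + ε_m` of `F_q^m`, as an element of the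
monoid of self-maps of `F_q^m` under composition. -/
def sigmaAff (F : Type*) [Field F] (m : ℕ) : Function.End (Fin m → F) :=
  fun x => Matrix.vecMul x (1 + nilJordan F m) + (fun i : Fin m => if (i : ℕ) = 0 then (1 : F) else 0)

/-!
Homogenizing, `σ` is the restriction of `v ↦ v·J_{m+1}` to the affine hyperplane `v₀ = 1` of
`F^{m+1}`, and this hyperplane spans, so `σ` has the order of `J_{m+1} = 1 + N_{m+1}`. In
characteristic `p` the Frobenius identity gives `(1 + N)^{p^k} = 1 + N^{p^k}`, and
`N_{m+1}^{p^k} = 0` exactly when `m + 1 ≤ p^k`, i.e. when `k > ⌊log_p m⌋`.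
-/

open Matrix

section NilJordan

variable {F : Type*} [Field F]

theorem nilJordan_pow_apply {n : ℕ} (k : ℕ) (i j : Fin n) :
    (nilJordan F n ^ k) i j = if (j : ℕ) = i + k then 1 else 0 := by
  induction k generalizing j with
  | zero => simp [one_apply, Fin.ext_iff, eq_comm]
  | succ k ih =>
    simp only [pow_succ, mul_apply, ih, nilJordan, ite_mul, one_mul, zero_mul]
    rw [Fin.sum_univ_eq_sum_range
      (fun l => if l = i + k then if (j : ℕ) = l + 1 then (1 : F) else 0 else 0),
      Finset.sum_ite_eq']
    split_ifs <;> simp_all <;> omega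

theorem nilJordan_pow_eq_zero_iff {n k : ℕ} : nilJordan F n ^ k = 0 ↔ n ≤ k := by
  constructor
  · intro h
    by_contra! hkn
    have h0k := congr_fun₂ h ⟨0, by omega⟩ ⟨k, hkn⟩
    simp [nilJordan_pow_apply] at h0k
  · intro hnk
    ext i j
    rw [nilJordan_pow_apply, if_neg (by omega), Matrix.zero_apply]

theorem one_add_nilJordan_pow_char_pow_eq_one_iff (p : ℕ) [Fact p.Prime] [CharP F p]
    (n k : ℕ) [NeZero n] : (1 + nilJordan F n) ^ p ^ k = 1 ↔ n ≤ p ^ k := by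
  rw [add_pow_char_pow_of_commute p _ (Commute.one_left _), one_pow, add_eq_left,
    nilJordan_pow_eq_zero_iff]

theorem vecMul_nilJordan_apply {n : ℕ} (x : Fin n → F) (j : Fin n) :
    (x ᵥ* nilJordan F n) j = ∑ i : Fin n, if (j : ℕ) = i + 1 then x i else 0 := by
  simp [vecMul, dotProduct, nilJordan]

end NilJordan

section Homogenization

variable {F : Type*} [Field F] {m : ℕ}

theorem cons_one_vecMul_one_add_nilJordan (x : Fin m → F) :
    (Fin.cons 1 x : Fin (m + 1) → F) ᵥ* (1 + nilJordan F (m + 1)) =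
      Fin.cons 1 (sigmaAff F m x) := by
  ext j
  refine Fin.cases ?_ (fun j => ?_) j
  · simp [vecMul_add, vecMul_nilJordan_apply]
  · simp only [sigmaAff, vecMul_add, vecMul_one, Pi.add_apply, Fin.cons_succ,
      vecMul_nilJordan_apply, Fin.val_succ, Nat.add_right_cancel_iff, Fin.sum_univ_succ,
      Fin.val_zero, Fin.cons_zero]
    ring

theorem cons_one_vecMul_one_add_nilJordan_pow (k : ℕ) (x : Fin m → F) :
    (Fin.cons 1 x : Fin (m + 1) → F) ᵥ* (1 + nilJordan F (m + 1)) ^ k =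
      Fin.cons 1 ((sigmaAff F m ^ k) x) := by
  induction k generalizing x with
  | zero => rw [pow_zero, pow_zero, vecMul_one]; rfl
  | succ k ih =>
    rw [pow_succ', ← vecMul_vecMul, cons_one_vecMul_one_add_nilJordan, ih]
    rfl

theorem sigmaAff_pow_eq_one_iff (k : ℕ) :
    sigmaAff F m ^ k = 1 ↔ (1 + nilJordan F (m + 1)) ^ k = 1 := by
  constructor
  · intro h
    have h_fix (x : Fin m → F) :
        (Fin.cons 1 x : Fin (m + 1) → F) ᵥ* (1 + nilJordan F (m + 1)) ^ k = Fin.cons 1 x := by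
      rw [cons_one_vecMul_one_add_nilJordan_pow, h]
      rfl
    have h_span (v : Fin (m + 1) → F) :
        v = Fin.cons 1 (Fin.tail v) - (1 - v 0) • Fin.cons 1 0 := by
      ext j
      refine Fin.cases ?_ (fun j => ?_) j <;> simp [Fin.tail]
    refine ext_iff_vecMul.2 fun v => ?_
    rw [vecMul_one, h_span v, sub_vecMul, smul_vecMul, h_fix, h_fix]
  · intro h
    funext x
    have hx := cons_one_vecMul_one_add_nilJordan_pow k x
    rw [h, vecMul_one] at hx
    exact (Fin.cons_right_injective 1 hx).symm

theorem orderOf_sigmaAff : orderOf (sigmaAff F m) = orderOf (1 + nilJordan F (m + 1)) :=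
  orderOf_eq_orderOf_iff.2 sigmaAff_pow_eq_one_iff

end Homogenization

theorem stmt_5_general {p : ℕ} (hp : p.Prime) {F : Type*} [Field F] [CharP F p]
    (m : ℕ) (hm : 1 ≤ m) :
    orderOf (sigmaAff F m) = p ^ (1 + Nat.log p m) := by
  have : Fact p.Prime := ⟨hp⟩
  rw [orderOf_sigmaAff, add_comm 1 (Nat.log p m)]
  apply orderOf_eq_prime_pow
  · rw [one_add_nilJordan_pow_char_pow_eq_one_iff p, not_le]
    exact Nat.lt_succ_of_le (Nat.pow_log_le_self p (by omega))
  · rw [one_add_nilJordan_pow_char_pow_eq_one_iff p]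
    exact Nat.lt_pow_succ_log_self hp.one_lt m

/-- The order of `σ : x ↦ x·J_m + ε_m` in the group of affine bijections of `F_q^m`
(here computed in the monoid of self-maps, to which `σ` belongs) is `p^{1 + ⌊log_p m⌋}`. -/
theorem stmt_5 {p : ℕ} (hp : p.Prime) {F : Type*} [Field F] [Fintype F] [CharP F p]
    (m : ℕ) (hm : 1 ≤ m) :
    orderOf (sigmaAff F m) = p ^ (1 + Nat.log p m) :=
  stmt_5_general hp m hm
end

section
/- Let A be an m × m matrix and B an n × n matrix over a commutative ring, and let 0 ≤ k ≤ m, 0 ≤ l ≤ n. Then the Kronecker product C_k(A) ⊗ C_l(B) of the k-th compound of A and the l-th compound of B appears as a principal submatrix of the (k+l)-th compound matrix C_{k+l}(A ⊕ B) of the block diagonal matrix A ⊕ B, namely the principal submatrix indexed by subsets of the form S ∪ T' where S ⊆ {1,...,m} has size k and T' = {m + j : j ∈ T} for T ⊆ {1,...,n} of size l. -/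
/-!
Every element of `S` lies below every element of `m + T`, so listing `S ∪ (m + T)` in increasing
order lists `S` first and then `m + T`. Hence the `(S ∪ (m + T), S' ∪ (m + T'))` minor of `A ⊕ B`
is the determinant of the block diagonal matrix with blocks `A(S, S')` and `B(T, T')`, which is
`det A(S, S') * det B(T, T')`.
-/

/-- The `r`-th compound matrix: rows and columns indexed by `r`-subsets `S, T`,
with `(S,T)`-entry `det M(S,T)`. -/
def compound {R : Type*} [CommRing R] {ι : Type*} [Fintype ι] [LinearOrder ι]
    (M : Matrix ι ι R) (r : ℕ) :
    Matrix {S : Finset ι // S.card = r} {S : Finset ι // S.card = r} R :=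
  fun S T =>
    Matrix.det (Matrix.of fun i j : Fin r =>
      M (S.1.orderIsoOfFin S.2 i) (T.1.orderIsoOfFin T.2 j))

/-- Embedding `{1,…,m} ↪ {1,…,m+n}` (identity). -/
def embL (m n : ℕ) : Fin m ↪ Fin (m + n) :=
  Function.Embedding.trans (Function.Embedding.inl) (finSumFinEquiv.toEmbedding)

/-- Embedding `{1,…,n} ↪ {1,…,m+n}`, `j ↦ m + j`. -/
def embR (m n : ℕ) : Fin n ↪ Fin (m + n) :=
  Function.Embedding.trans (Function.Embedding.inr) (finSumFinEquiv.toEmbedding)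

lemma Fin.strictMono_append {α : Type*} [Preorder α] {k l : ℕ} {f : Fin k → α} {g : Fin l → α}
    (hf : StrictMono f) (hg : StrictMono g) (hfg : ∀ i j, f i < g j) :
    StrictMono (Fin.append f g) := by
  intro x y hxy
  induction x using Fin.addCases with
  | left a =>
    induction y using Fin.addCases with
    | left a' => simpa using hf ((Fin.strictMono_castAdd l).lt_iff_lt.mp hxy)
    | right b' => simpa using hfg a b'
  | right b =>
    induction y using Fin.addCases with
    | left a' => simp only [Fin.lt_def, Fin.val_natAdd, Fin.val_castAdd] at hxy; omega
    | right b' => simpa using hg ((Fin.strictMono_natAdd k).lt_iff_lt.mp hxy)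

lemma embL_apply (m n : ℕ) (i : Fin m) : embL m n i = Fin.castAdd n i :=
  rfl

lemma embR_apply (m n : ℕ) (j : Fin n) : embR m n j = Fin.natAdd m j :=
  rfl

lemma compound_apply {R : Type*} [CommRing R] {ι : Type*} [Fintype ι] [LinearOrder ι]
    (M : Matrix ι ι R) (r : ℕ) (S T : {S : Finset ι // S.card = r}) :
    compound M r S T = (M.submatrix (S.1.orderEmbOfFin S.2) (T.1.orderEmbOfFin T.2)).det :=
  rfl

lemma orderEmbOfFin_map_embL_union_map_embR {m n k l : ℕ} {S : Finset (Fin m)}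
    {T : Finset (Fin n)} (hS : S.card = k) (hT : T.card = l)
    (hU : (S.map (embL m n) ∪ T.map (embR m n)).card = k + l) :
    ⇑((S.map (embL m n) ∪ T.map (embR m n)).orderEmbOfFin hU) =
      Fin.append (Fin.castAdd n ∘ S.orderEmbOfFin hS) (Fin.natAdd m ∘ T.orderEmbOfFin hT) := by
  symm
  refine Finset.orderEmbOfFin_unique hU (fun x => ?_) ?_
  · induction x using Fin.addCases with
    | left a =>
      rw [Fin.append_left, Function.comp_apply, ← embL_apply]
      exact Finset.mem_union_left _ (Finset.mem_map_of_mem _ (S.orderEmbOfFin_mem hS a))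
    | right b =>
      rw [Fin.append_right, Function.comp_apply, ← embR_apply]
      exact Finset.mem_union_right _ (Finset.mem_map_of_mem _ (T.orderEmbOfFin_mem hT b))
  · refine Fin.strictMono_append ((Fin.strictMono_castAdd n).comp (S.orderEmbOfFin hS).strictMono)
      ((Fin.strictMono_natAdd m).comp (T.orderEmbOfFin hT).strictMono) fun i j => ?_
    simp only [Function.comp_apply, Fin.lt_def, Fin.val_castAdd, Fin.val_natAdd]
    omega

lemma Matrix.submatrix_fromBlocks_append {α : Type*} {m m' n n' k k' l l' : ℕ}
    (A : Matrix (Fin m) (Fin m') α) (B : Matrix (Fin m) (Fin n') α)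
    (C : Matrix (Fin n) (Fin m') α) (D : Matrix (Fin n) (Fin n') α)
    (f₁ : Fin k → Fin m) (g₁ : Fin l → Fin n) (f₂ : Fin k' → Fin m') (g₂ : Fin l' → Fin n') :
    ((fromBlocks A B C D).submatrix finSumFinEquiv.symm finSumFinEquiv.symm).submatrix
        (Fin.append (Fin.castAdd n ∘ f₁) (Fin.natAdd m ∘ g₁))
        (Fin.append (Fin.castAdd n' ∘ f₂) (Fin.natAdd m' ∘ g₂)) =
      (fromBlocks (A.submatrix f₁ f₂) (B.submatrix f₁ g₂) (C.submatrix g₁ f₂)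
        (D.submatrix g₁ g₂)).submatrix finSumFinEquiv.symm finSumFinEquiv.symm := by
  ext i j
  induction i using Fin.addCases <;> induction j using Fin.addCases <;> simp

theorem stmt_11_general {R : Type*} [CommRing R] {m n k l : ℕ}
    (A : Matrix (Fin m) (Fin m) R) (B : Matrix (Fin n) (Fin n) R)
    (S₁ S₂ : Finset (Fin m)) (T₁ T₂ : Finset (Fin n))
    (hS₁ : S₁.card = k) (hS₂ : S₂.card = k) (hT₁ : T₁.card = l) (hT₂ : T₂.card = l)
    (hU₁ : (S₁.map (embL m n) ∪ T₁.map (embR m n)).card = k + l)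
    (hU₂ : (S₂.map (embL m n) ∪ T₂.map (embR m n)).card = k + l) :
    compound ((Matrix.fromBlocks A 0 0 B).submatrix finSumFinEquiv.symm finSumFinEquiv.symm)
        (k + l) ⟨S₁.map (embL m n) ∪ T₁.map (embR m n), hU₁⟩
        ⟨S₂.map (embL m n) ∪ T₂.map (embR m n), hU₂⟩
      = Matrix.kroneckerMap (· * ·) (compound A k) (compound B l)
          (⟨S₁, hS₁⟩, ⟨T₁, hT₁⟩) (⟨S₂, hS₂⟩, ⟨T₂, hT₂⟩) := by
  rw [compound_apply, Matrix.kroneckerMap_apply, compound_apply, compound_apply,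
    orderEmbOfFin_map_embL_union_map_embR hS₁ hT₁ hU₁,
    orderEmbOfFin_map_embL_union_map_embR hS₂ hT₂ hU₂, Matrix.submatrix_fromBlocks_append,
    Matrix.det_submatrix_equiv_self]
  exact Matrix.det_fromBlocks_zero₁₂ _ _ _

/-- `C_k(A) ⊗ C_l(B)` is the principal submatrix of `C_{k+l}(A ⊕ B)` indexed by the
subsets `S ∪ T'` with `S ⊆ {1,…,m}`, `|S| = k`, and `T' = {m + j : j ∈ T}`,
`T ⊆ {1,…,n}`, `|T| = l`: the corresponding entries agree. -/
theorem stmt_11 {R : Type*} [CommRing R] {m n k l : ℕ} (hk : k ≤ m) (hl : l ≤ n)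
    (A : Matrix (Fin m) (Fin m) R) (B : Matrix (Fin n) (Fin n) R)
    (S₁ S₂ : Finset (Fin m)) (T₁ T₂ : Finset (Fin n))
    (hS₁ : S₁.card = k) (hS₂ : S₂.card = k) (hT₁ : T₁.card = l) (hT₂ : T₂.card = l)
    (hU₁ : (S₁.map (embL m n) ∪ T₁.map (embR m n)).card = k + l)
    (hU₂ : (S₂.map (embL m n) ∪ T₂.map (embR m n)).card = k + l) :
    compound ((Matrix.fromBlocks A 0 0 B).submatrix finSumFinEquiv.symm finSumFinEquiv.symm)
        (k + l) ⟨S₁.map (embL m n) ∪ T₁.map (embR m n), hU₁⟩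
        ⟨S₂.map (embL m n) ∪ T₂.map (embR m n), hU₂⟩
      = Matrix.kroneckerMap (· * ·) (compound A k) (compound B l)
          (⟨S₁, hS₁⟩, ⟨T₁, hT₁⟩) (⟨S₂, hS₂⟩, ⟨T₂, hT₂⟩) :=
  stmt_11_general A B S₁ S₂ T₁ T₂ hS₁ hS₂ hT₁ hT₂ hU₁ hU₂
end

section
/- Let F be a field, J_n the n × n unipotent Jordan block over F (ones on the diagonal and superdiagonal), and 1 ≤ r ≤ n. Then the r-th compound matrix C_r(J_n) has block upper triangular form: with rows/columns indexed by r-subsets of {1,...,n}, the entry det J_n(S, T) is 0 whenever n ∈ S and n ∉ T; moreover the principal block on subsets not containing n equals C_r(J_{n-1}), and the principal block on subsets containing n equals C_{r-1}(J_{n-1}) (identifying S ∪ {n} with S). -/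
/-!
The last row of `J_{n+1}` is the last standard basis vector. Hence a minor whose row set
contains `n + 1` has a zero row unless its column set contains `n + 1` too, and in that case
Laplace expansion along that row (the last row of the minor, with sign `+1`) reduces it to
the minor of `J_n` on the remaining indices. Minors avoiding `n + 1` only see the leading
`n × n` block, which is `J_n`.
-/

/-- The `n × n` unipotent Jordan block: ones on the diagonal and superdiagonal. -/
def jordan (F : Type*) [Field F] (n : ℕ) : Matrix (Fin n) (Fin n) F :=
  fun i j => if j = i then 1 else if (j : ℕ) = (i : ℕ) + 1 then 1 else 0

/-- Determinant of the submatrix of `M` with rows in `S` and columns in `T`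
(in increasing order) — the `(S,T)`-entry of the `r`-th compound matrix. -/
def subdet {R : Type*} [CommRing R] {ι : Type*} [LinearOrder ι] {r : ℕ}
    (M : Matrix ι ι R) (S T : Finset ι) (hS : S.card = r) (hT : T.card = r) : R :=
  Matrix.det (Matrix.of fun i j : Fin r =>
    M (S.orderIsoOfFin hS i) (T.orderIsoOfFin hT j))

namespace Finset

variable {α β : Type*} [LinearOrder α] [LinearOrder β]

theorem orderEmbOfFin_map_apply {f : α ↪ β} (hf : StrictMono f) (s : Finset α) {k : ℕ}
    (h : s.card = k) (h' : (s.map f).card = k) (i : Fin k) :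
    (s.map f).orderEmbOfFin h' i = f (s.orderEmbOfFin h i) := by
  refine (congrFun (orderEmbOfFin_unique h' (f := fun i => f (s.orderEmbOfFin h i))
    (fun i => mem_map_of_mem f (s.orderEmbOfFin_mem h i))
    (hf.comp (s.orderEmbOfFin h).strictMono)) i).symm

theorem orderEmbOfFin_insert_of_forall_lt {s : Finset α} {a : α} (ha : ∀ x ∈ s, x < a)
    {k : ℕ} (h : s.card = k) (h' : (insert a s).card = k + 1) :
    ⇑((insert a s).orderEmbOfFin h') = Fin.snoc (α := fun _ => α) (s.orderEmbOfFin h) a := by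
  refine (orderEmbOfFin_unique h' (fun i => ?_) (fun i j hij => ?_)).symm
  · induction i using Fin.lastCases with
    | last => simp
    | cast i => simp [mem_insert_of_mem (s.orderEmbOfFin_mem h i)]
  · induction j using Fin.lastCases with
    | last =>
      obtain ⟨i, rfl⟩ := Fin.exists_castSucc_eq.2 hij.ne
      simpa using ha _ (s.orderEmbOfFin_mem h i)
    | cast j =>
      obtain ⟨i, rfl⟩ := Fin.exists_castSucc_eq.2 (hij.trans (Fin.castSucc_lt_last j)).ne
      simpa using hij

end Finset

section subdet

variable {R : Type*} [CommRing R] {ι : Type*} [LinearOrder ι]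

theorem subdet_eq_zero_of_row_eq_zero {r : ℕ} (M : Matrix ι ι R) {S T : Finset ι}
    (hS : S.card = r) (hT : T.card = r) {i : ι} (hi : i ∈ S) (hrow : ∀ j ∈ T, M i j = 0) :
    subdet M S T hS hT = 0 := by
  refine Matrix.det_eq_zero_of_row_eq_zero ((S.orderIsoOfFin hS).symm ⟨i, hi⟩) fun j => ?_
  simp only [Matrix.of_apply, OrderIso.apply_symm_apply]
  exact hrow _ (T.orderIsoOfFin hT j).2

theorem subdet_map {κ : Type*} [LinearOrder κ] {f : ι ↪ κ} (hf : StrictMono f) {r : ℕ}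
    (M : Matrix κ κ R) (S T : Finset ι) (hS : S.card = r) (hT : T.card = r)
    (hS' : (S.map f).card = r) (hT' : (T.map f).card = r) :
    subdet M (S.map f) (T.map f) hS' hT' = subdet (M.submatrix f f) S T hS hT := by
  simp only [subdet, Finset.coe_orderIsoOfFin_apply, Finset.orderEmbOfFin_map_apply hf S hS,
    Finset.orderEmbOfFin_map_apply hf T hT, Matrix.submatrix_apply]

theorem subdet_insert_of_row_eq_zero {m : ℕ} (M : Matrix ι ι R) {S T : Finset ι} {a b : ι}
    (ha : ∀ x ∈ S, x < a) (hb : ∀ x ∈ T, x < b) (hrow : ∀ j ∈ T, M a j = 0)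
    (hS : S.card = m) (hT : T.card = m)
    (hS' : (insert a S).card = m + 1) (hT' : (insert b T).card = m + 1) :
    subdet M (insert a S) (insert b T) hS' hT' = M a b * subdet M S T hS hT := by
  unfold subdet
  rw [Matrix.det_succ_row _ (Fin.last m), Finset.sum_eq_single (Fin.last m)]
  · simp [Finset.coe_orderIsoOfFin_apply, Finset.orderEmbOfFin_insert_of_forall_lt ha hS,
      Finset.orderEmbOfFin_insert_of_forall_lt hb hT, Matrix.submatrix]
  · intro j _ hj
    obtain ⟨j, rfl⟩ := Fin.exists_castSucc_eq.2 hj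
    simp [Finset.coe_orderIsoOfFin_apply, Finset.orderEmbOfFin_insert_of_forall_lt ha hS,
      Finset.orderEmbOfFin_insert_of_forall_lt hb hT, hrow _ (T.orderEmbOfFin_mem hT j)]
  · simp

end subdet

section jordan

variable (F : Type*) [Field F] (n : ℕ)

theorem jordan_submatrix_castSucc :
    (jordan F (n + 1)).submatrix Fin.castSucc Fin.castSucc = jordan F n := by
  ext i j
  simp only [jordan, Matrix.submatrix_apply, Fin.castSucc_inj, Fin.val_castSucc]

theorem jordan_last_apply (j : Fin (n + 1)) :
    jordan F (n + 1) (Fin.last n) j = if j = Fin.last n then 1 else 0 := by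
  have : (j : ℕ) ≠ n + 1 := by omega
  by_cases hj : j = Fin.last n <;> simp [jordan, hj, this]

theorem subdet_jordan_map_castSuccEmb {r : ℕ} (S T : Finset (Fin n))
    (hS : S.card = r) (hT : T.card = r)
    (hS' : (S.map Fin.castSuccEmb).card = r) (hT' : (T.map Fin.castSuccEmb).card = r) :
    subdet (jordan F (n + 1)) (S.map Fin.castSuccEmb) (T.map Fin.castSuccEmb) hS' hT'
      = subdet (jordan F n) S T hS hT := by
  rw [subdet_map Fin.strictMono_castSucc _ S T hS hT, Fin.coe_castSuccEmb,
    jordan_submatrix_castSucc]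

end jordan

theorem stmt_13_general {F : Type*} [Field F] (n r : ℕ) (hr : 1 ≤ r) :
    (∀ (S T : Finset (Fin (n + 1))) (hS : S.card = r) (hT : T.card = r),
        Fin.last n ∈ S → Fin.last n ∉ T → subdet (jordan F (n + 1)) S T hS hT = 0) ∧
    (∀ (S T : Finset (Fin n)) (hS : S.card = r) (hT : T.card = r)
        (hS' : (S.map Fin.castSuccEmb).card = r)
        (hT' : (T.map Fin.castSuccEmb).card = r),
        subdet (jordan F (n + 1)) (S.map Fin.castSuccEmb)
            (T.map Fin.castSuccEmb) hS' hT'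
          = subdet (jordan F n) S T hS hT) ∧
    (∀ (S T : Finset (Fin n)) (hS : S.card = r - 1) (hT : T.card = r - 1)
        (hS' : (insert (Fin.last n) (S.map Fin.castSuccEmb)).card = r)
        (hT' : (insert (Fin.last n) (T.map Fin.castSuccEmb)).card = r),
        subdet (jordan F (n + 1)) (insert (Fin.last n) (S.map Fin.castSuccEmb))
            (insert (Fin.last n) (T.map Fin.castSuccEmb)) hS' hT'
          = subdet (jordan F n) S T hS hT) := by
  obtain ⟨m, rfl⟩ : ∃ m, r = m + 1 := ⟨r - 1, by omega⟩
  have hlt (S : Finset (Fin n)) : ∀ x ∈ S.map Fin.castSuccEmb, x < Fin.last n := by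
    simp [Fin.castSucc_lt_last]
  refine ⟨fun S T hS hT hSn hTn => ?_, fun S T hS hT _ _ => subdet_jordan_map_castSuccEmb F n S T
    hS hT _ _, fun S T hS hT hS' hT' => ?_⟩
  · refine subdet_eq_zero_of_row_eq_zero _ hS hT hSn fun j hj => ?_
    rw [jordan_last_apply, if_neg (ne_of_mem_of_not_mem hj hTn)]
  · rw [subdet_insert_of_row_eq_zero _ (hlt S) (hlt T) _ ((S.card_map _).trans hS)
      ((T.card_map _).trans hT), jordan_last_apply, if_pos rfl, one_mul,
      subdet_jordan_map_castSuccEmb]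
    intro j hj
    rw [jordan_last_apply, if_neg (hlt T j hj).ne]

/-- Block upper-triangular structure of `C_r(J_{n+1})`: the entry `det J_{n+1}(S,T)`
vanishes when the last index lies in `S` but not in `T`; the principal block on
subsets avoiding the last index is `C_r(J_n)`; and the principal block on subsets
containing the last index is `C_{r-1}(J_n)`. -/
theorem stmt_13 {F : Type*} [Field F] (n r : ℕ) (hr : 1 ≤ r) (hrn : r ≤ n + 1) :
    (∀ (S T : Finset (Fin (n + 1))) (hS : S.card = r) (hT : T.card = r),
        Fin.last n ∈ S → Fin.last n ∉ T → subdet (jordan F (n + 1)) S T hS hT = 0) ∧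
    (∀ (S T : Finset (Fin n)) (hS : S.card = r) (hT : T.card = r)
        (hS' : (S.map Fin.castSuccEmb).card = r)
        (hT' : (T.map Fin.castSuccEmb).card = r),
        subdet (jordan F (n + 1)) (S.map Fin.castSuccEmb)
            (T.map Fin.castSuccEmb) hS' hT'
          = subdet (jordan F n) S T hS hT) ∧
    (∀ (S T : Finset (Fin n)) (hS : S.card = r - 1) (hT : T.card = r - 1)
        (hS' : (insert (Fin.last n) (S.map Fin.castSuccEmb)).card = r)
        (hT' : (insert (Fin.last n) (T.map Fin.castSuccEmb)).card = r),
        subdet (jordan F (n + 1)) (insert (Fin.last n) (S.map Fin.castSuccEmb))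
            (insert (Fin.last n) (T.map Fin.castSuccEmb)) hS' hT'
          = subdet (jordan F n) S T hS hT) :=
  stmt_13_general n r hr
end

section
/- Let F be a field, J_n the n × n unipotent Jordan block over F, and r ≥ 1. Then rank(C_r(J_n) − I) ≥ C(n−1, r), where C_r denotes the r-th compound matrix and C(n−1, r) the binomial coefficient. -/
/-!
Restrict `C_r(J_{m+1}) - 1` to the rows `S ⊆ {0, …, m-1}` and the columns `T + 1`, for
`r`-subsets `S, T` of `Fin m`. Since `J_{m+1}` with rows shifted by `castSucc` and columns by
`succ` is `J_mᵀ`, this block is `C_r(J_m)ᵀ - P`, where `P` has its ones at `S = T + 1`.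
Order the `r`-subsets by their weight `∑ S`: the compound of the upper unitriangular `J_m` is
block triangular with identity diagonal blocks, while `P` only links subsets whose weights differ
by `r ≥ 1`. Hence the block has determinant `1`, and its rank `C(m, r)` bounds the rank below.
-/

open Finset Matrix

theorem Matrix.exists_perm_forall_ne_zero_of_det_ne_zero {R n : Type*} [CommRing R] [Fintype n]
    [DecidableEq n] {M : Matrix n n R} (h : M.det ≠ 0) :
    ∃ σ : Equiv.Perm n, ∀ j, M (σ j) j ≠ 0 := by
  contrapose! h
  rw [det_apply]
  refine sum_eq_zero fun σ _ => ?_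
  obtain ⟨j, hj⟩ := h σ
  rw [prod_eq_zero (f := fun i => M (σ i) i) (mem_univ j) hj, smul_zero]

theorem Matrix.BlockTriangular.det_eq_one {R n α : Type*} [CommRing R] [Fintype n] [DecidableEq n]
    [LinearOrder α] {M : Matrix n n R} {b : n → α} (hM : M.BlockTriangular b)
    (hdiag : ∀ i j, b i = b j → M i j = (1 : Matrix n n R) i j) : M.det = 1 := by
  rw [hM.det]
  refine prod_eq_one fun k _ => ?_
  have : M.toSquareBlock b k = 1 := by
    ext i j
    simp only [toSquareBlock_def, of_apply, hdiag _ _ (i.2.trans j.2.symm), one_apply,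
      Subtype.ext_iff]
  rw [this, det_one]

def Finset.mapSubtypeCard {ι κ : Type*} (f : κ ↪ ι) (r : ℕ) :
    {S : Finset κ // S.card = r} → {S : Finset ι // S.card = r} :=
  fun S => ⟨S.1.map f, by rw [card_map, S.2]⟩

namespace Finset

variable {ι κ : Type*} [LinearOrder ι] [LinearOrder κ]

theorem orderIsoOfFin_mapSubtypeCard (f : κ ↪o ι) {r : ℕ} (S : {S : Finset κ // S.card = r})
    (i : Fin r) :
    ((mapSubtypeCard f.toEmbedding r S).1.orderIsoOfFin (mapSubtypeCard f.toEmbedding r S).2 i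
      : ι) = f (S.1.orderIsoOfFin S.2 i) := by
  have := orderEmbOfFin_unique (mapSubtypeCard f.toEmbedding r S).2
    (f := fun i => f (S.1.orderEmbOfFin S.2 i))
    (fun i => mem_map_of_mem _ (orderEmbOfFin_mem _ _ i))
    (f.strictMono.comp (orderEmbOfFin _ _).strictMono)
  exact (congrFun this i).symm

@[to_additive]
theorem prod_orderIsoOfFin {M : Type*} [CommMonoid M] (S : Finset ι) {r : ℕ} (h : S.card = r)
    (f : ι → M) : ∏ i : Fin r, f (S.orderIsoOfFin h i) = ∏ x ∈ S, f x := by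
  rw [← prod_coe_sort S f]
  exact Fintype.prod_equiv (S.orderIsoOfFin h).toEquiv _ _ fun _ => rfl

@[to_additive]
theorem prod_orderIsoOfFin_perm {M : Type*} [CommMonoid M] (S : Finset ι) {r : ℕ} (h : S.card = r)
    (σ : Equiv.Perm (Fin r)) (f : ι → M) :
    ∏ i : Fin r, f (S.orderIsoOfFin h (σ i)) = ∏ x ∈ S, f x := by
  rw [Equiv.prod_comp σ fun i => f (S.orderIsoOfFin h i), prod_orderIsoOfFin]

end Finset

section Compound

variable {R ι : Type*} [CommRing R] [Fintype ι] [LinearOrder ι]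

theorem compound_transpose (M : Matrix ι ι R) (r : ℕ) : compound Mᵀ r = (compound M r)ᵀ := by
  ext S T
  exact (det_transpose _).symm

theorem compound_submatrix {κ : Type*} [Fintype κ] [LinearOrder κ] (M : Matrix ι ι R)
    (f g : κ ↪o ι) (r : ℕ) :
    compound (M.submatrix f g) r =
      (compound M r).submatrix (mapSubtypeCard f.toEmbedding r)
        (mapSubtypeCard g.toEmbedding r) := by
  ext S T
  simp only [compound, submatrix_apply, orderIsoOfFin_mapSubtypeCard]

theorem compound_apply_self_of_isUpperTriangular {M : Matrix ι ι R} (hM : M.IsUpperTriangular)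
    {r : ℕ} (S : {S : Finset ι // S.card = r}) : compound M r S S = ∏ i ∈ S.1, M i i := by
  rw [compound, det_of_isUpperTriangular, ← prod_orderIsoOfFin S.1 S.2]
  · rfl
  · intro i j hij
    exact hM ((S.1.orderIsoOfFin S.2).strictMono hij)

end Compound

theorem Matrix.IsUpperTriangular.blockTriangular_of_strictMono {R ι α : Type*} [Zero R]
    [LinearOrder ι] [Preorder α] {M : Matrix ι ι R} (hM : M.IsUpperTriangular) {b : ι → α}
    (hb : StrictMono b) : M.BlockTriangular b :=
  fun _ _ h => hM (hb.lt_iff_lt.mp h)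

section Weight

variable {R ι α : Type*} [CommRing R] [Fintype ι] [LinearOrder ι] {M : Matrix ι ι R} {r : ℕ}

theorem exists_perm_le_of_compound_ne_zero [LinearOrder α] {b : ι → α}
    (hM : M.BlockTriangular b) {S T : {S : Finset ι // S.card = r}} (h : compound M r S T ≠ 0) :
    ∃ σ : Equiv.Perm (Fin r),
      ∀ j, b (S.1.orderIsoOfFin S.2 (σ j)) ≤ b (T.1.orderIsoOfFin T.2 j) := by
  obtain ⟨σ, hσ⟩ := exists_perm_forall_ne_zero_of_det_ne_zero h
  exact ⟨σ, fun j => not_lt.mp fun hlt => hσ j (hM hlt)⟩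

variable [AddCommMonoid α] [LinearOrder α] {b : ι → α}

theorem Matrix.BlockTriangular.compound [IsOrderedAddMonoid α] (hM : M.BlockTriangular b) (r : ℕ) :
    (compound M r).BlockTriangular fun S => ∑ i ∈ S.1, b i := by
  intro S T hlt
  by_contra h
  obtain ⟨σ, hσ⟩ := exists_perm_le_of_compound_ne_zero hM h
  refine hlt.not_ge ?_
  calc ∑ i ∈ S.1, b i = ∑ j, b (S.1.orderIsoOfFin S.2 (σ j)) :=
        (sum_orderIsoOfFin_perm _ _ σ _).symm
    _ ≤ ∑ j, b (T.1.orderIsoOfFin T.2 j) := sum_le_sum fun j _ => hσ j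
    _ = ∑ i ∈ T.1, b i := sum_orderIsoOfFin _ _ _

variable [IsOrderedCancelAddMonoid α]

theorem compound_eq_zero_of_sum_eq (hM : M.BlockTriangular b) (hb : Function.Injective b)
    {S T : {S : Finset ι // S.card = r}} (hST : S ≠ T)
    (hw : ∑ i ∈ S.1, b i = ∑ i ∈ T.1, b i) : compound M r S T = 0 := by
  by_contra h
  obtain ⟨σ, hσ⟩ := exists_perm_le_of_compound_ne_zero hM h
  rw [← sum_orderIsoOfFin_perm _ S.2 σ, ← sum_orderIsoOfFin _ T.2] at hw
  have heq := (sum_eq_sum_iff_of_le fun j _ => hσ j).1 hw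
  refine hST (Subtype.ext
    (eq_of_subset_of_card_le (fun x hx => ?_) (S.2.trans T.2.symm).le).symm)
  obtain ⟨j, rfl⟩ : ∃ j, (T.1.orderIsoOfFin T.2 j : ι) = x :=
    ⟨(T.1.orderIsoOfFin T.2).symm ⟨x, hx⟩, by simp⟩
  rw [← hb (heq j (mem_univ j))]
  exact (S.1.orderIsoOfFin S.2 (σ j)).2

theorem compound_apply_of_sum_eq [DecidableEq ι] (hM : M.IsUpperTriangular)
    (hdiag : ∀ i, M i i = 1) (hb : StrictMono b) {S T : {S : Finset ι // S.card = r}}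
    (hw : ∑ i ∈ S.1, b i = ∑ i ∈ T.1, b i) : compound M r S T = (1 : Matrix _ _ R) S T := by
  obtain rfl | hST := eq_or_ne S T
  · rw [one_apply_eq, compound_apply_self_of_isUpperTriangular hM, prod_eq_one fun i _ => hdiag i]
  · rw [one_apply_ne hST]
    exact compound_eq_zero_of_sum_eq (hM.blockTriangular_of_strictMono hb) hb.injective hST hw

end Weight

section Jordan

variable (F : Type*) [Field F]

theorem jordan_isUpperTriangular (n : ℕ) : (jordan F n).IsUpperTriangular := by
  intro i j hji
  have : (j : ℕ) < i := hji
  simp only [jordan]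
  rw [if_neg (by omega), if_neg (by omega)]

theorem jordan_apply_self {n : ℕ} (i : Fin n) : jordan F n i i = 1 :=
  if_pos rfl

theorem jordan_submatrix_castSucc_succ (m : ℕ) :
    (jordan F (m + 1)).submatrix Fin.castSucc Fin.succ = (jordan F m)ᵀ := by
  ext i j
  simp only [jordan, submatrix_apply, transpose_apply, Fin.ext_iff, Fin.val_succ,
    Fin.val_castSucc]
  grind

theorem compound_jordan_submatrix_castSucc_succ (m r : ℕ) :
    (compound (jordan F (m + 1)) r).submatrix
        (mapSubtypeCard Fin.castSuccOrderEmb.toEmbedding r)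
        (mapSubtypeCard (Fin.succOrderEmb m).toEmbedding r) =
      (compound (jordan F m) r)ᵀ := by
  rw [← compound_submatrix, ← compound_transpose]
  exact congrArg (compound · r) (jordan_submatrix_castSucc_succ F m)

end Jordan

theorem Fin.sum_val_lt_of_map_castSucc_eq_map_succ {m : ℕ} {S T : Finset (Fin m)}
    (hT : T.Nonempty) (h : S.map Fin.castSuccEmb = T.map (Fin.succEmb m)) :
    ∑ i ∈ T, (i : ℕ) < ∑ i ∈ S, (i : ℕ) := by
  have hsum := congrArg (fun s : Finset (Fin (m + 1)) => ∑ i ∈ s, (i : ℕ)) h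
  simp only [sum_map, Fin.coe_castSuccEmb, Fin.val_castSucc, Fin.coe_succEmb, Fin.val_succ,
    sum_add_distrib, Finset.sum_const, smul_eq_mul, mul_one] at hsum
  have := hT.card_pos
  omega

theorem one_apply_mapSubtypeCard_castSucc_succ_eq_zero (R : Type*) [CommRing R] {m r : ℕ}
    (hr : 1 ≤ r)
    {S T : {S : Finset (Fin m) // S.card = r}} (h : ∑ i ∈ S.1, (i : ℕ) ≤ ∑ i ∈ T.1, (i : ℕ)) :
    (1 : Matrix {S : Finset (Fin (m + 1)) // S.card = r} _ R)
      (mapSubtypeCard Fin.castSuccOrderEmb.toEmbedding r S)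
      (mapSubtypeCard (Fin.succOrderEmb m).toEmbedding r T) = 0 :=
  one_apply_ne fun he => (Fin.sum_val_lt_of_map_castSucc_eq_map_succ
    (card_pos.mp (hr.trans_eq T.2.symm)) (congrArg Subtype.val he)).not_ge h

/-- `rank(C_r(J_n) - I) ≥ C(n-1, r)` for `r ≥ 1`. -/
theorem stmt_14 {F : Type*} [Field F] (n r : ℕ) (hr : 1 ≤ r) :
    (n - 1).choose r ≤ (compound (jordan F n) r - 1).rank := by
  obtain _ | m := n
  · simp [Nat.choose_eq_zero_of_lt hr]
  let ρ := mapSubtypeCard (Fin.castSuccOrderEmb (n := m)).toEmbedding r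
  let κ := mapSubtypeCard (Fin.succOrderEmb m).toEmbedding r
  let W : {S : Finset (Fin m) // S.card = r} → ℕ := fun S => ∑ i ∈ S.1, (i : ℕ)
  set N := ((compound (jordan F (m + 1)) r - 1).submatrix ρ κ)ᵀ with hN_def
  have hN : N = compound (jordan F m) r - ((1 : Matrix _ _ F).submatrix ρ κ)ᵀ := by
    rw [hN_def, submatrix_sub, Pi.sub_apply, Pi.sub_apply, transpose_sub,
      compound_jordan_submatrix_castSucc_succ, transpose_transpose]
  have hbt : N.BlockTriangular W := by
    rw [hN]
    have hC := (jordan_isUpperTriangular F m).blockTriangular_of_strictMono Fin.val_strictMono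
    exact (hC.compound r).sub fun S T h => one_apply_mapSubtypeCard_castSucc_succ_eq_zero F hr h.le
  have hdet : N.det = 1 := by
    refine hbt.det_eq_one fun S T h => ?_
    rw [hN, Matrix.sub_apply, transpose_apply, submatrix_apply,
      one_apply_mapSubtypeCard_castSucc_succ_eq_zero F hr h.ge, sub_zero]
    exact compound_apply_of_sum_eq (jordan_isUpperTriangular F m) (jordan_apply_self F)
      Fin.val_strictMono h
  calc (m + 1 - 1).choose r = Fintype.card {S : Finset (Fin m) // S.card = r} := by
        simp [Fintype.card_finset_len]
    _ = N.rank := (rank_of_isUnit N ((isUnit_iff_isUnit_det N).mpr (hdet ▸ isUnit_one))).symm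
    _ ≤ _ := (rank_transpose _).trans_le (rank_submatrix_le _ _ _)
end
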